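/- Let ρ and σ be positive semi-definite operators with spectral decompositions ρ = Σ_k q_k |φ_k⟩⟨φ_k| and σ = Σ_j p_j |ψ_j⟩⟨ψ_j|. For every t ∈ (0,1], Σ_{j,k} q_k²/(p_j + q_k·t) · |⟨ψ_j|φ_k⟩|² = (1/t) · [ Tr[ρ] − inf_Z ( Tr[ρ (𝟙+Z†)(𝟙+Z)] + (1/t)·Tr[σ Z Z†] ) ]. -/

import Mathlib

open Matrix

/-!
Write `ρ = U diag(q) Uᴴ` and `σ = V diag(p) Vᴴ`, where the unitaries `U` and `V` have the
`φ_k` and the `ψ_j` as columns, and put `C = VᴴU`, so that `C_{jk} = ⟨ψ_j|φ_k⟩`. In the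
coordinates `A = VᴴZU` the functional becomes
`Σ_{j,k} (q_k |C_{jk} + A_{jk}|² + (p_j/t) |A_{jk}|²)`, a sum of independent scalar problems.
Each one is minimised by completing the square: `min_a (q|c + a|² + r|a|²) = qr/(q + r) |c|²`.
Since `Tr ρ = Σ_{j,k} q_k |C_{jk}|²`, the theorem reduces entrywise to
`q²/(p + qt) = (1/t) (q - qp/(p + qt))`.
-/

theorem isLeast_range_sum {ι M : Type*} [Fintype ι] [AddCommMonoid M] [PartialOrder M]
    [IsOrderedAddMonoid M] {α : ι → Type*} {f : ∀ i, α i → M} {m : ι → M}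
    (h : ∀ i, IsLeast (Set.range (f i)) (m i)) :
    IsLeast (Set.range fun x : ∀ i, α i => ∑ i, f i (x i)) (∑ i, m i) := by
  choose x hx using fun i => (h i).1
  refine ⟨⟨x, Finset.sum_congr rfl fun i _ => hx i⟩, ?_⟩
  rintro _ ⟨y, rfl⟩
  exact Finset.sum_le_sum fun i _ => (h i).2 ⟨y i, rfl⟩

namespace Complex

theorem isLeast_range_mul_normSq_add {q r : ℝ} (hq : 0 ≤ q) (hr : 0 ≤ r) (c : ℂ) :
    IsLeast (Set.range fun a : ℂ => q * normSq (c + a) + r * normSq a)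
      (q * r / (q + r) * normSq c) := by
  rcases (add_nonneg hq hr).eq_or_lt with h | h
  · obtain ⟨rfl, rfl⟩ : q = 0 ∧ r = 0 := ⟨by linarith, by linarith⟩
    exact ⟨⟨0, by simp⟩, by rintro _ ⟨a, rfl⟩; simp⟩
  have complete_square : ∀ a, q * normSq (c + a) + r * normSq a =
      q * r / (q + r) * normSq c + (q + r) * normSq (a + (q / (q + r) : ℝ) * c) := by
    intro a
    simp only [normSq_apply, add_re, add_im, mul_re, mul_im, ofReal_re, ofReal_im]
    field_simp
    ring
  refine ⟨⟨-(q / (q + r) : ℝ) * c, ?_⟩, ?_⟩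
  · dsimp only
    rw [complete_square]
    simp
  · rintro _ ⟨a, rfl⟩
    dsimp only
    rw [complete_square]
    exact le_add_of_nonneg_right (mul_nonneg h.le (normSq_nonneg _))

end Complex

namespace Matrix

open Complex

variable {ι : Type*} [Fintype ι]

theorem conjTranspose_transpose_of_mul_transpose_of_apply {α : Type*} [CommSemiring α]
    [StarRing α] (w v : ι → ι → α) (j k : ι) :
    ((of w)ᵀᴴ * (of v)ᵀ) j k = star (w j) ⬝ᵥ v k := by
  simp [mul_apply, dotProduct]

variable [DecidableEq ι]

theorem sum_smul_vecMulVec_star {α : Type*} [CommSemiring α] [StarRing α] (d : ι → α)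
    (v : ι → ι → α) :
    ∑ k, d k • vecMulVec (v k) (star (v k)) = (of v)ᵀ * diagonal d * (of v)ᵀᴴ := by
  ext i l
  rw [mul_apply]
  simp only [sum_apply, smul_apply, vecMulVec_apply, mul_diagonal, transpose_apply,
    of_apply, conjTranspose_apply, Pi.star_apply, smul_eq_mul]
  exact Finset.sum_congr rfl fun k _ => by ring

theorem transpose_of_mem_unitaryGroup {α : Type*} [CommRing α] [StarRing α]
    {v : ι → ι → α} (hv : ∀ k l, star (v k) ⬝ᵥ v l = if k = l then 1 else 0) :
    (of v)ᵀ ∈ unitaryGroup ι α := by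
  rw [mem_unitaryGroup_iff']
  ext k l
  rw [star_eq_conjTranspose, conjTranspose_transpose_of_mul_transpose_of_apply, hv, one_apply]

theorem re_trace_diagonal_mul_conjTranspose_mul_self (d : ι → ℝ) (M : Matrix ι ι ℂ) :
    (trace (diagonal (fun k => (d k : ℂ)) * (Mᴴ * M))).re =
      ∑ j, ∑ k, d k * normSq (M j k) := by
  have hdiag : ∀ k, (Mᴴ * M) k k = ((∑ j, normSq (M j k) : ℝ) : ℂ) := by
    intro k
    simp [mul_apply, normSq_eq_conj_mul_self]
  simp only [trace, diag_apply, diagonal_mul, hdiag, ← ofReal_mul, ← ofReal_sum, ofReal_re]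
  rw [Finset.sum_comm]
  simp only [Finset.mul_sum]

theorem re_trace_conj_diagonal_mul_conjTranspose_mul_self {U V : Matrix ι ι ℂ}
    (hV : V * Vᴴ = 1) (d : ι → ℝ) (M : Matrix ι ι ℂ) :
    (trace (U * diagonal (fun k => (d k : ℂ)) * Uᴴ * (Mᴴ * M))).re =
      ∑ j, ∑ k, d k * normSq ((Vᴴ * M * U) j k) := by
  have hconj : Uᴴ * (Mᴴ * M) * U = (Vᴴ * M * U)ᴴ * (Vᴴ * M * U) := by
    simp only [conjTranspose_mul, conjTranspose_conjTranspose, Matrix.mul_assoc]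
    rw [← Matrix.mul_assoc V, hV, Matrix.one_mul]
  rw [← re_trace_diagonal_mul_conjTranspose_mul_self, ← hconj]
  congr 1
  rw [Matrix.mul_assoc U, Matrix.mul_assoc U, trace_mul_comm U]
  simp only [Matrix.mul_assoc]

theorem re_trace_conj_diagonal {U V : Matrix ι ι ℂ} (hV : V * Vᴴ = 1) (d : ι → ℝ) :
    (trace (U * diagonal (fun k => (d k : ℂ)) * Uᴴ)).re =
      ∑ j, ∑ k, d k * normSq ((Vᴴ * U) j k) := by
  simpa using re_trace_conj_diagonal_mul_conjTranspose_mul_self (U := U) hV d 1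

theorem re_trace_conj_diagonal_mul_self_mul_conjTranspose {U V : Matrix ι ι ℂ}
    (hU : U * Uᴴ = 1) (d : ι → ℝ) (M : Matrix ι ι ℂ) :
    (trace (V * diagonal (fun j => (d j : ℂ)) * Vᴴ * (M * Mᴴ))).re =
      ∑ j, ∑ k, d j * normSq ((Vᴴ * M * U) j k) := by
  have hstar : Uᴴ * Mᴴ * V = (Vᴴ * M * U)ᴴ := by
    simp only [conjTranspose_mul, conjTranspose_conjTranspose, Matrix.mul_assoc]
  have h := re_trace_conj_diagonal_mul_conjTranspose_mul_self (U := V) hU d Mᴴ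
  rw [conjTranspose_conjTranspose, hstar] at h
  rw [h, Finset.sum_comm]
  simp [conjTranspose_apply]

theorem isLeast_range_re_trace_conj_diagonal {U V : Matrix ι ι ℂ} (hU : U ∈ unitaryGroup ι ℂ)
    (hV : V ∈ unitaryGroup ι ℂ) {q p : ι → ℝ} (hq : ∀ k, 0 ≤ q k) (hp : ∀ j, 0 ≤ p j) {s : ℝ}
    (hs : 0 ≤ s) :
    IsLeast (Set.range fun Z : Matrix ι ι ℂ =>
        (trace (U * diagonal (fun k => (q k : ℂ)) * Uᴴ * ((1 + Zᴴ) * (1 + Z)))).re +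
          s * (trace (V * diagonal (fun j => (p j : ℂ)) * Vᴴ * (Z * Zᴴ))).re)
      (∑ j, ∑ k, q k * (s * p j) / (q k + s * p j) * normSq ((Vᴴ * U) j k)) := by
  have hU₁ : Uᴴ * U = 1 := mem_unitaryGroup_iff'.1 hU
  have hU₂ : U * Uᴴ = 1 := mem_unitaryGroup_iff.1 hU
  have hV₁ : Vᴴ * V = 1 := mem_unitaryGroup_iff'.1 hV
  have hV₂ : V * Vᴴ = 1 := mem_unitaryGroup_iff.1 hV
  have hobj : ∀ Z : Matrix ι ι ℂ,
      (trace (U * diagonal (fun k => (q k : ℂ)) * Uᴴ * ((1 + Zᴴ) * (1 + Z)))).re +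
          s * (trace (V * diagonal (fun j => (p j : ℂ)) * Vᴴ * (Z * Zᴴ))).re =
        ∑ j, ∑ k, (q k * normSq ((Vᴴ * U) j k + (Vᴴ * Z * U) j k) +
          s * p j * normSq ((Vᴴ * Z * U) j k)) := by
    intro Z
    have hsplit : Vᴴ * (1 + Z) * U = Vᴴ * U + Vᴴ * Z * U := by
      simp only [Matrix.mul_add, Matrix.add_mul, Matrix.mul_one]
    rw [show 1 + Zᴴ = (1 + Z)ᴴ by simp, re_trace_conj_diagonal_mul_conjTranspose_mul_self hV₂,
      re_trace_conj_diagonal_mul_self_mul_conjTranspose hU₂, hsplit]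
    simp only [add_apply, Finset.mul_sum, ← Finset.sum_add_distrib, mul_assoc]
  have hsurj : Function.Surjective fun Z : Matrix ι ι ℂ => Vᴴ * Z * U := fun A =>
    ⟨V * A * Uᴴ, by
      simp only [Matrix.mul_assoc, hU₁, ← Matrix.mul_assoc Vᴴ, hV₁, Matrix.one_mul, Matrix.mul_one]⟩
  have hrange := hsurj.range_comp fun A : Matrix ι ι ℂ => ∑ j, ∑ k,
    (q k * normSq ((Vᴴ * U) j k + A j k) + s * p j * normSq (A j k))
  simp only [Function.comp_def] at hrange
  simp_rw [hobj, hrange]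
  exact isLeast_range_sum fun j => isLeast_range_sum fun k =>
    isLeast_range_mul_normSq_add (hq k) (mul_nonneg hs (hp j)) ((Vᴴ * U) j k)

end Matrix

/-- Let `ρ = Σ_k q_k |φ_k⟩⟨φ_k|` and `σ = Σ_j p_j |ψ_j⟩⟨ψ_j|` be positive semi-definite
operators given via spectral decompositions.  For every `t ∈ (0,1]`,
`Σ_{j,k} q_k²/(p_j + q_k t) |⟨ψ_j|φ_k⟩|²
  = (1/t)·[ Tr[ρ] − inf_Z ( Tr[ρ (𝟙+Z†)(𝟙+Z)] + (1/t)·Tr[σ Z Z†] ) ]`. -/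
theorem stmt5 {n : ℕ} (q p : Fin n → ℝ) (hq : ∀ k, 0 ≤ q k) (hp : ∀ j, 0 ≤ p j)
    (φ ψ : Fin n → (Fin n → ℂ))
    (hφ : ∀ k l, star (φ k) ⬝ᵥ φ l = if k = l then 1 else 0)
    (hψ : ∀ k l, star (ψ k) ⬝ᵥ ψ l = if k = l then 1 else 0)
    (ρ σ : Matrix (Fin n) (Fin n) ℂ)
    (hρ : ρ = ∑ k, (q k : ℂ) • vecMulVec (φ k) (star (φ k)))
    (hσ : σ = ∑ j, (p j : ℂ) • vecMulVec (ψ j) (star (ψ j)))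
    (t : ℝ) (ht : t ∈ Set.Ioc (0 : ℝ) 1) :
    ∑ j, ∑ k, q k ^ 2 / (p j + q k * t) * ‖star (ψ j) ⬝ᵥ φ k‖ ^ 2 =
      (1 / t) * ((trace ρ).re - ⨅ Z : Matrix (Fin n) (Fin n) ℂ,
        ((trace (ρ * ((1 + Zᴴ) * (1 + Z)))).re +
          (1 / t) * (trace (σ * (Z * Zᴴ))).re)) := by
  have ht₀ : 0 < t := ht.1
  have hU := transpose_of_mem_unitaryGroup hφ
  have hV := transpose_of_mem_unitaryGroup hψ
  have hentry : ∀ j k, q k ^ 2 / (p j + q k * t) =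
      1 / t * (q k - q k * (1 / t * p j) / (q k + 1 / t * p j)) := by
    intro j k
    rcases (add_nonneg (hp j) (mul_nonneg (hq k) ht₀.le)).eq_or_lt with h | h
    · obtain ⟨hpj, hqk⟩ : p j = 0 ∧ q k = 0 := by
        constructor <;> nlinarith [hp j, hq k, mul_nonneg (hq k) ht₀.le]
      simp [hpj, hqk]
    · rw [show q k + 1 / t * p j = (p j + q k * t) / t by field_simp; ring]
      field_simp
      ring
  rw [sum_smul_vecMulVec_star] at hρ hσ
  subst hρ hσ
  rw [← sInf_range,
    (isLeast_range_re_trace_conj_diagonal hU hV hq hp (one_div_nonneg.2 ht₀.le)).csInf_eq,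
    re_trace_conj_diagonal (mem_unitaryGroup_iff.1 hV)]
  simp only [← Finset.sum_sub_distrib, Finset.mul_sum]
  refine Finset.sum_congr rfl fun j _ => Finset.sum_congr rfl fun k _ => ?_
  rw [conjTranspose_transpose_of_mul_transpose_of_apply, Complex.sq_norm, hentry]
  ring
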